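/- arXiv:1609.05177 — 2 statements merged into one kernel-verified Lean document; each statement's English description precedes it below -/
import Mathlib

section
/- Let α ∈ (1/2,1), λ* > 0, C > 0, and set λ = αλ*/(C Γ(1−α)). Let λ₁: ℝ₊ → ℝ₊ be integrable with ‖λ₁‖₁ = 1 satisfying the heavy-tail condition αx^α ∫_x^∞ λ₁ → C. Let a_T ∈ (0,1) with T^α(1−a_T) → λ*, and define ρ₁^T(x) = T(1−a_T) ∑_{k≥1} a_T^k λ₁^{*k}(Tx). Then for every z > 0 the Laplace transform ρ̂₁^T(z) = (1−a_T) a_T λ̂₁(z/T)/(1 − a_T λ̂₁(z/T)) converges as T → ∞ to λ/(λ + z^α), the Laplace transform of the Mittag-Leffler density f^{α,λ}. -/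
open MeasureTheory Filter

noncomputable def sconv (f g : ℝ → ℝ) : ℝ → ℝ :=
  fun t => ∫ s in (0:ℝ)..t, f s * g (t - s)

/-- `sconvPow f k` is the (k+1)-st scalar convolution power λ^{*(k+1)}. -/
noncomputable def sconvPow (f : ℝ → ℝ) : ℕ → ℝ → ℝ
  | 0 => f
  | (k + 1) => sconv f (sconvPow f k)

/-!
Under the Laplace transform convolution becomes multiplication, so after the substitution
`x ↦ T x` the transform of `ρ^T` is the geometric series `(1 - a) ∑ (a λ̂₁(z/T))^(k+1)`.
By Fubini, `1 - λ̂₁(s) = ∫₀^∞ e^{-v} Λ(v/s) dv` where `Λ(u) = ∫_u^∞ λ₁`, and since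
`x^α Λ(x) → C/α`, dominated convergence gives `T^α (1 - λ̂₁(z/T)) → (C/α) Γ(1-α) z^α`.
Multiplying numerator and denominator by `T^α`, the transform tends to
`λ* / (λ* + (C/α) Γ(1-α) z^α) = λ / (λ + z^α)`.
-/

open Set Real Topology
open scoped Convolution

noncomputable def laplace (f : ℝ → ℝ) (s : ℝ) : ℝ :=
  ∫ x in Ioi 0, f x * exp (-(s * x))

section Convolution

variable {f g : ℝ → ℝ} {s : ℝ}

lemma integrable_of_integrableOn_Ioi (hf0 : ∀ x < 0, f x = 0) (hf : IntegrableOn f (Ioi 0)) :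
    Integrable f :=
  (integrableOn_Ici_iff_integrableOn_Ioi).mpr hf |>.integrable_of_forall_notMem_eq_zero
    fun x hx => hf0 x (not_le.mp hx)

lemma integrableOn_Ioi_mul_exp_neg (hf : IntegrableOn f (Ioi 0)) (hs : 0 ≤ s) :
    IntegrableOn (fun x => f x * exp (-(s * x))) (Ioi 0) := by
  refine Integrable.mono hf (hf.aestronglyMeasurable.mul
    (by fun_prop : Continuous fun x => exp (-(s * x))).aestronglyMeasurable) ?_
  filter_upwards [ae_restrict_mem measurableSet_Ioi] with x hx
  rw [norm_mul, Real.norm_of_nonneg (exp_pos _).le]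
  exact mul_le_of_le_one_right (norm_nonneg _)
    (exp_le_one_iff.mpr (neg_nonpos.mpr (mul_nonneg hs (le_of_lt hx))))

lemma integrable_mul_exp_neg (hf0 : ∀ x < 0, f x = 0) (hf : Integrable f) (hs : 0 ≤ s) :
    Integrable (fun x => f x * exp (-(s * x))) :=
  integrable_of_integrableOn_Ioi (fun x hx => by simp [hf0 x hx])
    (integrableOn_Ioi_mul_exp_neg hf.integrableOn hs)

lemma laplace_eq_integral (hf0 : ∀ x < 0, f x = 0) :
    laplace f s = ∫ x, f x * exp (-(s * x)) := by
  rw [laplace, ← integral_Ici_eq_integral_Ioi, setIntegral_eq_integral_of_forall_compl_eq_zero]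
  intro x hx
  rw [hf0 x (not_le.mp hx), zero_mul]

lemma mul_apply_sub_eq_zero (hf0 : ∀ x < 0, f x = 0) (hg0 : ∀ x < 0, g x = 0) {t u : ℝ}
    (hu : u ∉ Icc 0 t) : f u * g (t - u) = 0 := by
  rcases not_and_or.mp hu with hu | hu
  · rw [hf0 u (not_le.mp hu), zero_mul]
  · rw [hg0 (t - u) (by linarith [not_le.mp hu]), mul_zero]

lemma sconv_eq_convolution (hf0 : ∀ x < 0, f x = 0) (hg0 : ∀ x < 0, g x = 0) :
    sconv f g = f ⋆[ContinuousLinearMap.mul ℝ ℝ] g := by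
  funext t
  simp only [sconv, convolution, ContinuousLinearMap.mul_apply']
  rcases le_or_gt 0 t with ht | ht
  · rw [intervalIntegral.integral_of_le ht, ← integral_Icc_eq_integral_Ioc,
      setIntegral_eq_integral_of_forall_compl_eq_zero fun u hu => mul_apply_sub_eq_zero hf0 hg0 hu]
  · have hzero : ∀ u, f u * g (t - u) = 0 := fun u =>
      mul_apply_sub_eq_zero hf0 hg0 fun hu => (hu.1.trans hu.2).not_gt ht
    simp [hzero]

lemma sconv_eq_zero_of_neg (hf0 : ∀ x < 0, f x = 0) (hg0 : ∀ x < 0, g x = 0) {t : ℝ}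
    (ht : t < 0) : sconv f g t = 0 := by
  rw [sconv_eq_convolution hf0 hg0, convolution]
  simp only [ContinuousLinearMap.mul_apply']
  have hzero : ∀ u, f u * g (t - u) = 0 := fun u =>
    mul_apply_sub_eq_zero hf0 hg0 fun hu => (hu.1.trans hu.2).not_gt ht
  simp [hzero]

lemma sconv_nonneg (hf : ∀ x, 0 ≤ f x) (hg : ∀ x, 0 ≤ g x) (hf0 : ∀ x < 0, f x = 0)
    (hg0 : ∀ x < 0, g x = 0) (t : ℝ) : 0 ≤ sconv f g t := by
  rw [sconv_eq_convolution hf0 hg0, convolution]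
  exact integral_nonneg fun u => mul_nonneg (hf u) (hg _)

/-- The exponential weight is multiplicative, so it passes through the convolution. -/
lemma laplace_sconv (hf0 : ∀ x < 0, f x = 0) (hg0 : ∀ x < 0, g x = 0) (hf : Integrable f)
    (hg : Integrable g) (hs : 0 ≤ s) : laplace (sconv f g) s = laplace f s * laplace g s := by
  set ef := fun x => f x * exp (-(s * x))
  set eg := fun x => g x * exp (-(s * x))
  have hweight : ∀ t, sconv f g t * exp (-(s * t)) = (ef ⋆[ContinuousLinearMap.mul ℝ ℝ] eg) t := by
    intro t
    simp only [sconv_eq_convolution hf0 hg0, convolution, ContinuousLinearMap.mul_apply', ef, eg,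
      ← integral_mul_const]
    congr 1 with u
    rw [show -(s * t) = -(s * u) + -(s * (t - u)) by ring, exp_add]
    ring
  rw [laplace_eq_integral fun t ht => sconv_eq_zero_of_neg hf0 hg0 ht, laplace_eq_integral hf0,
    laplace_eq_integral hg0, funext hweight,
    integral_convolution _ (integrable_mul_exp_neg hf0 hf hs) (integrable_mul_exp_neg hg0 hg hs)]
  rfl

end Convolution

section ConvolutionPowers

variable {f : ℝ → ℝ} {s : ℝ}

lemma sconvPow_eq_zero_of_neg (hf0 : ∀ x < 0, f x = 0) (k : ℕ) :
    ∀ x < 0, sconvPow f k x = 0 := by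
  induction k with
  | zero => exact hf0
  | succ k ih => exact fun x hx => sconv_eq_zero_of_neg hf0 ih hx

lemma sconvPow_nonneg (hf : ∀ x, 0 ≤ f x) (hf0 : ∀ x < 0, f x = 0) (k : ℕ) (x : ℝ) :
    0 ≤ sconvPow f k x := by
  induction k generalizing x with
  | zero => exact hf x
  | succ k ih => exact sconv_nonneg hf ih hf0 (sconvPow_eq_zero_of_neg hf0 k) x

lemma integrable_sconvPow (hf0 : ∀ x < 0, f x = 0) (hfi : Integrable f) (k : ℕ) :
    Integrable (sconvPow f k) := by
  induction k with
  | zero => exact hfi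
  | succ k ih =>
    rw [sconvPow, sconv_eq_convolution hf0 (sconvPow_eq_zero_of_neg hf0 k)]
    exact hfi.integrable_convolution _ ih

lemma laplace_sconvPow (hf0 : ∀ x < 0, f x = 0) (hfi : Integrable f) (hs : 0 ≤ s) (k : ℕ) :
    laplace (sconvPow f k) s = laplace f s ^ (k + 1) := by
  induction k with
  | zero => rw [sconvPow, zero_add, pow_one]
  | succ k ih =>
    rw [sconvPow, laplace_sconv hf0 (sconvPow_eq_zero_of_neg hf0 k) hfi
      (integrable_sconvPow hf0 hfi k) hs, ih, pow_succ' _ (k + 1)]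

lemma laplace_nonneg (hf : ∀ x, 0 ≤ f x) : 0 ≤ laplace f s :=
  setIntegral_nonneg measurableSet_Ioi fun x _ => mul_nonneg (hf x) (exp_pos _).le

lemma laplace_le_integral (hf : ∀ x, 0 ≤ f x) (hfi : IntegrableOn f (Ioi 0)) (hs : 0 ≤ s) :
    laplace f s ≤ ∫ x in Ioi 0, f x :=
  setIntegral_mono_on (integrableOn_Ioi_mul_exp_neg hfi hs) hfi measurableSet_Ioi fun x hx =>
    mul_le_of_le_one_right (hf x) (exp_le_one_iff.mpr (neg_nonpos.mpr (mul_nonneg hs (le_of_lt hx))))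

lemma laplace_tsum_sconvPow (hf : ∀ x, 0 ≤ f x) (hf0 : ∀ x < 0, f x = 0) (hfi : Integrable f)
    {a : ℝ} (ha : 0 ≤ a) (hs : 0 ≤ s) (haL : a * laplace f s < 1) :
    laplace (fun y => ∑' k : ℕ, a ^ (k + 1) * sconvPow f k y) s =
      a * laplace f s / (1 - a * laplace f s) := by
  set F : ℕ → ℝ → ℝ := fun k y => a ^ (k + 1) * (sconvPow f k y * exp (-(s * y)))
  have hF_nonneg : ∀ k y, 0 ≤ F k y := fun k y =>
    mul_nonneg (pow_nonneg ha _) (mul_nonneg (sconvPow_nonneg hf hf0 k y) (exp_pos _).le)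
  have hF_int : ∀ k, IntegrableOn (F k) (Ioi 0) := fun k =>
    ((integrable_mul_exp_neg (sconvPow_eq_zero_of_neg hf0 k) (integrable_sconvPow hf0 hfi k)
      hs).const_mul _).integrableOn
  have hF_integral : ∀ k, ∫ y in Ioi 0, F k y = (a * laplace f s) ^ (k + 1) := fun k => by
    rw [integral_const_mul, ← laplace, laplace_sconvPow hf0 hfi hs, mul_pow]
  have hgeom : 0 ≤ a * laplace f s := mul_nonneg ha (laplace_nonneg hf)
  have hsum : Summable fun k : ℕ => (a * laplace f s) ^ (k + 1) :=
    (summable_nat_add_iff 1).mpr (summable_geometric_of_lt_one hgeom haL)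
  calc laplace (fun y => ∑' k : ℕ, a ^ (k + 1) * sconvPow f k y) s
      = ∫ y in Ioi 0, ∑' k, F k y := by
        simp only [laplace, F, ← tsum_mul_right, mul_assoc]
    _ = ∑' k : ℕ, (a * laplace f s) ^ (k + 1) := by
        rw [← integral_tsum_of_summable_integral_norm hF_int]
        · exact tsum_congr hF_integral
        · simpa only [Real.norm_of_nonneg (hF_nonneg _ _), hF_integral] using hsum
    _ = a * laplace f s / (1 - a * laplace f s) := by
        simp only [pow_succ', tsum_mul_left, tsum_geometric_of_lt_one hgeom haL, div_eq_mul_inv]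

end ConvolutionPowers

lemma setIntegral_comp_mul_mul_exp_neg (f : ℝ → ℝ) {T : ℝ} (hT : 0 < T) (z : ℝ) :
    ∫ x in Ioi 0, f (T * x) * exp (-(z * x)) = T⁻¹ * laplace f (z / T) := by
  have h := integral_comp_mul_left_Ioi (fun y => f y * exp (-(z / T * y))) 0 hT
  rw [mul_zero, smul_eq_mul] at h
  rw [laplace, ← h]
  congr 1 with x
  field_simp

lemma laplace_rescaled_renewal_density {f : ℝ → ℝ} (hf : ∀ x, 0 ≤ f x)
    (hf0 : ∀ x < 0, f x = 0) (hfi : IntegrableOn f (Ioi 0)) (hmass : ∫ x in Ioi 0, f x ≤ 1)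
    {a T z : ℝ} (ha0 : 0 ≤ a) (ha1 : a < 1) (hT : 0 < T) (hz : 0 ≤ z) :
    ∫ x in Ioi 0, (T * (1 - a) * ∑' k : ℕ, a ^ (k + 1) * sconvPow f k (T * x)) * exp (-(z * x)) =
      (1 - a) * (a * laplace f (z / T)) / (1 - a * laplace f (z / T)) := by
  have hs : 0 ≤ z / T := div_nonneg hz hT.le
  have haL : a * laplace f (z / T) < 1 :=
    (mul_le_of_le_one_right ha0 ((laplace_le_integral hf hfi hs).trans hmass)).trans_lt ha1
  calc ∫ x in Ioi 0, (T * (1 - a) * ∑' k : ℕ, a ^ (k + 1) * sconvPow f k (T * x)) * exp (-(z * x))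
      = T * (1 - a) *
          ∫ x in Ioi 0, (∑' k : ℕ, a ^ (k + 1) * sconvPow f k (T * x)) * exp (-(z * x)) := by
        rw [← integral_const_mul]
        simp only [mul_assoc]
    _ = (1 - a) * (a * laplace f (z / T)) / (1 - a * laplace f (z / T)) := by
        rw [setIntegral_comp_mul_mul_exp_neg (fun y => ∑' k : ℕ, a ^ (k + 1) * sconvPow f k y) hT,
          laplace_tsum_sconvPow hf hf0 (integrable_of_integrableOn_Ioi hf0 hfi) ha0 hs haL]
        field_simp

section Tail

variable {f : ℝ → ℝ}

/-- Fubini applied to `1 - e^{-s x} = ∫₀^{s x} e^{-v} dv`. -/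
lemma setIntegral_mul_one_sub_exp_neg (hf : IntegrableOn f (Ioi 0)) {s : ℝ} (hs : 0 < s) :
    ∫ x in Ioi 0, f x * (1 - exp (-(s * x))) = ∫ v in Ioi 0, exp (-v) * ∫ x in Ioi (v / s), f x := by
  set E : Set (ℝ × ℝ) := {p | p.2 < s * p.1}
  set F : ℝ × ℝ → ℝ := E.indicator fun p => f p.1 * exp (-p.2)
  have hexp : IntegrableOn (fun v => exp (-v)) (Ioi 0) := by
    simpa using exp_neg_integrableOn_Ioi 0 one_pos
  have hF : Integrable F ((volume.restrict (Ioi 0)).prod (volume.restrict (Ioi 0))) :=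
    (hf.mul_prod hexp).indicator (measurableSet_lt measurable_snd (measurable_fst.const_mul s))
  have hinner_v : ∀ x ∈ Ioi (0 : ℝ), ∫ v in Ioi 0, F (x, v) = f x * (1 - exp (-(s * x))) := by
    intro x hx
    have hsx : 0 ≤ s * x := mul_nonneg hs.le (le_of_lt hx)
    have hsection : ∀ v, F (x, v) = (Iio (s * x)).indicator (fun v => f x * exp (-v)) v := fun v => by
      simp only [F, E, indicator, mem_ofPred_eq, mem_Iio]
    simp_rw [hsection]
    rw [setIntegral_indicator measurableSet_Iio, Ioi_inter_Iio, ← integral_Ioc_eq_integral_Ioo,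
      ← intervalIntegral.integral_of_le hsx, intervalIntegral.integral_const_mul]
    simp
  have hinner_x : ∀ v ∈ Ioi (0 : ℝ), ∫ x in Ioi 0, F (x, v) = exp (-v) * ∫ x in Ioi (v / s), f x := by
    intro v hv
    have hsection : ∀ x, F (x, v) = (Ioi (v / s)).indicator (fun x => f x * exp (-v)) x := fun x => by
      simp only [F, E, indicator, mem_ofPred_eq, mem_Ioi, div_lt_iff₀' hs]
    simp_rw [hsection]
    rw [setIntegral_indicator measurableSet_Ioi, Ioi_inter_Ioi,
      sup_eq_right.mpr (div_nonneg (le_of_lt hv) hs.le), integral_mul_const, mul_comm]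
  calc ∫ x in Ioi 0, f x * (1 - exp (-(s * x)))
      = ∫ x in Ioi 0, ∫ v in Ioi 0, F (x, v) := (setIntegral_congr_fun measurableSet_Ioi hinner_v).symm
    _ = ∫ v in Ioi 0, ∫ x in Ioi 0, F (x, v) := integral_integral_swap hF
    _ = ∫ v in Ioi 0, exp (-v) * ∫ x in Ioi (v / s), f x := setIntegral_congr_fun measurableSet_Ioi hinner_x

lemma one_sub_laplace_eq (hf : IntegrableOn f (Ioi 0)) (hmass : ∫ x in Ioi 0, f x = 1) {s : ℝ}
    (hs : 0 < s) :
    1 - laplace f s = ∫ v in Ioi 0, exp (-v) * ∫ x in Ioi (v / s), f x := by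
  rw [← setIntegral_mul_one_sub_exp_neg hf hs, laplace]
  conv_lhs => rw [← hmass]
  rw [← integral_sub hf (integrableOn_Ioi_mul_exp_neg hf hs.le)]
  simp only [mul_sub, mul_one]

end Tail

section Abelian

variable {α : ℝ}

lemma exists_forall_abs_rpow_mul_le {g : ℝ → ℝ} {M c : ℝ} (hα : 0 ≤ α)
    (hg : ∀ x, 0 < x → |g x| ≤ M) (hlim : Tendsto (fun x => x ^ α * g x) atTop (𝓝 c)) :
    ∃ K, ∀ x, 0 < x → |x ^ α * g x| ≤ K := by
  obtain ⟨x₀, hx₀⟩ := eventually_atTop.mp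
    (hlim.abs.eventually (eventually_le_nhds (lt_add_one |c|)))
  refine ⟨max (|c| + 1) (x₀ ^ α * M), fun x hx => ?_⟩
  rcases le_or_gt x₀ x with h | h
  · exact (hx₀ x h).trans (le_max_left _ _)
  · calc |x ^ α * g x| = x ^ α * |g x| := by rw [abs_mul, abs_of_nonneg (rpow_nonneg hx.le α)]
      _ ≤ x₀ ^ α * M := mul_le_mul (rpow_le_rpow hx.le h.le hα) (hg x hx) (abs_nonneg _)
          (rpow_nonneg (hx.trans h).le α)
      _ ≤ _ := le_max_right _ _

lemma exp_neg_mul_div_rpow_eq {z v : ℝ} (hz : 0 ≤ z) (hv : 0 < v) :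
    exp (-v) * (z / v) ^ α = z ^ α * (exp (-v) * v ^ ((1 - α) - 1)) := by
  rw [div_rpow hz hv.le, show (1 - α) - 1 = -α by ring, rpow_neg hv.le]
  ring

lemma integrableOn_exp_neg_mul_div_rpow (hα : α < 1) {z : ℝ} (hz : 0 ≤ z) :
    IntegrableOn (fun v => exp (-v) * (z / v) ^ α) (Ioi 0) :=
  IntegrableOn.congr_fun ((GammaIntegral_convergent (sub_pos.mpr hα)).const_mul (z ^ α))
    (fun _ hv => (exp_neg_mul_div_rpow_eq hz hv).symm) measurableSet_Ioi

lemma integral_exp_neg_mul_div_rpow (hα : α < 1) {z : ℝ} (hz : 0 ≤ z) :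
    ∫ v in Ioi 0, exp (-v) * (z / v) ^ α = z ^ α * Gamma (1 - α) := by
  rw [Gamma_eq_integral (sub_pos.mpr hα), ← integral_const_mul]
  exact setIntegral_congr_fun measurableSet_Ioi fun _ hv => exp_neg_mul_div_rpow_eq hz hv

/-- An Abelian theorem, by dominated convergence after writing `T ^ α = (z / v) ^ α (v T / z) ^ α`. -/
lemma tendsto_rpow_mul_integral_exp_neg_mul {g : ℝ → ℝ} {c K z : ℝ} (hg : Measurable g)
    (hα1 : α < 1) (hK : ∀ x, 0 < x → |x ^ α * g x| ≤ K)
    (hlim : Tendsto (fun x => x ^ α * g x) atTop (𝓝 c)) (hz : 0 < z) :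
    Tendsto (fun T => T ^ α * ∫ v in Ioi 0, exp (-v) * g (v / (z / T))) atTop
      (𝓝 (c * Gamma (1 - α) * z ^ α)) := by
  set G : ℝ → ℝ → ℝ := fun T v => exp (-v) * (z / v) ^ α * ((v / (z / T)) ^ α * g (v / (z / T)))
  have hG : ∀ T, 0 < T → ∀ v ∈ Ioi (0 : ℝ), T ^ α * (exp (-v) * g (v / (z / T))) = G T v := by
    intro T hT v hv
    rw [mem_Ioi] at hv
    have hT_eq : T ^ α = (z / v) ^ α * (v / (z / T)) ^ α := by
      rw [← mul_rpow (div_pos hz hv).le (div_pos hv (div_pos hz hT)).le]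
      congr 1
      field_simp
    rw [hT_eq]
    ring
  have hdominated : Tendsto (fun T => ∫ v in Ioi 0, G T v) atTop
      (𝓝 (∫ v in Ioi 0, exp (-v) * (z / v) ^ α * c)) := by
    refine tendsto_integral_filter_of_dominated_convergence (fun v => exp (-v) * (z / v) ^ α * K)
      (Eventually.of_forall fun T => Measurable.aestronglyMeasurable (by fun_prop)) ?_
      ((integrableOn_exp_neg_mul_div_rpow hα1 hz.le).mul_const K) ?_
    · filter_upwards [eventually_gt_atTop 0] with T hT
      filter_upwards [ae_restrict_mem measurableSet_Ioi] with v hv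
      have hweight : 0 ≤ exp (-v) * (z / v) ^ α :=
        mul_nonneg (exp_pos _).le (rpow_nonneg (div_pos hz hv).le _)
      rw [norm_mul, Real.norm_of_nonneg hweight, Real.norm_eq_abs]
      exact mul_le_mul_of_nonneg_left (hK _ (div_pos hv (div_pos hz hT))) hweight
    · filter_upwards [ae_restrict_mem measurableSet_Ioi] with v hv
      have hscale : Tendsto (fun T => v / (z / T)) atTop atTop :=
        (tendsto_id.const_mul_atTop (div_pos hv hz)).congr fun T => by
          simp only [id]
          field_simp
      exact (hlim.comp hscale).const_mul _
  rw [integral_mul_const, integral_exp_neg_mul_div_rpow hα1 hz.le,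
    show z ^ α * Gamma (1 - α) * c = c * Gamma (1 - α) * z ^ α by ring] at hdominated
  refine hdominated.congr' ?_
  filter_upwards [eventually_gt_atTop 0] with T hT
  rw [← integral_const_mul]
  exact (setIntegral_congr_fun measurableSet_Ioi (hG T hT)).symm

end Abelian

lemma tendsto_rpow_mul_one_sub_laplace {f : ℝ → ℝ} {α C z : ℝ} (hf : ∀ x, 0 ≤ f x)
    (hfi : Integrable f) (hmass : ∫ x in Ioi 0, f x = 1) (hα0 : 0 < α) (hα1 : α < 1)
    (htail : Tendsto (fun x => α * x ^ α * ∫ s in Ioi x, f s) atTop (𝓝 C)) (hz : 0 < z) :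
    Tendsto (fun T => T ^ α * (1 - laplace f (z / T))) atTop
      (𝓝 (C / α * Gamma (1 - α) * z ^ α)) := by
  set Λ : ℝ → ℝ := fun u => ∫ x in Ioi u, f x
  have hΛ_anti : Antitone Λ := fun u v huv =>
    setIntegral_mono_set hfi.integrableOn (ae_of_all _ hf) (Ioi_subset_Ioi huv).eventuallyLE
  have hΛ_bdd : ∀ x, 0 < x → |Λ x| ≤ 1 := fun x hx => by
    rw [abs_of_nonneg (setIntegral_nonneg measurableSet_Ioi fun y _ => hf y), ← hmass]
    exact hΛ_anti hx.le
  have hlim : Tendsto (fun x => x ^ α * Λ x) atTop (𝓝 (C / α)) :=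
    (htail.div_const α).congr fun x => by simp only [Λ]; field_simp
  obtain ⟨K, hK⟩ := exists_forall_abs_rpow_mul_le hα0.le hΛ_bdd hlim
  refine (tendsto_rpow_mul_integral_exp_neg_mul hΛ_anti.measurable hα1 hK hlim hz).congr' ?_
  filter_upwards [eventually_gt_atTop 0] with T hT
  rw [one_sub_laplace_eq hfi.integrableOn hmass (div_pos hz hT)]

lemma tendsto_one_of_tendsto_rpow_mul_one_sub {u : ℝ → ℝ} {α c : ℝ} (hα : 0 < α)
    (h : Tendsto (fun T => T ^ α * (1 - u T)) atTop (𝓝 c)) : Tendsto u atTop (𝓝 1) := by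
  have h0 : Tendsto (fun T => 1 - u T) atTop (𝓝 0) := by
    refine (h.div_atTop (tendsto_rpow_atTop hα)).congr' ?_
    filter_upwards [eventually_gt_atTop 0] with T hT
    field_simp [(rpow_pos_of_pos hT α).ne']
  simpa using (tendsto_const_nhds (x := (1 : ℝ))).sub h0

theorem rho_laplace_convergence_general (α lamStar C : ℝ)
    (hα : α ∈ Set.Ioo (1/2 : ℝ) 1) (hls : 0 < lamStar) (hC : 0 < C)
    (lam : ℝ) (hlam : lam = α * lamStar / (C * Real.Gamma (1 - α)))
    (lam1 : ℝ → ℝ)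
    (hnn : ∀ x, 0 ≤ lam1 x) (hsupp : ∀ x < (0:ℝ), lam1 x = 0)
    (hint : IntegrableOn lam1 (Set.Ioi 0))
    (hnorm : ∫ x in Set.Ioi (0:ℝ), lam1 x = 1)
    (htail : Tendsto (fun x : ℝ => α * x ^ α * ∫ s in Set.Ioi x, lam1 s)
      atTop (nhds C))
    (a : ℝ → ℝ) (ha : ∀ T, a T ∈ Set.Ioo (0:ℝ) 1)
    (haT : Tendsto (fun T : ℝ => T ^ α * (1 - a T)) atTop (nhds lamStar))
    (Lhat : ℝ → ℝ)
    (hLhat : ∀ z, Lhat z = ∫ x in Set.Ioi (0:ℝ), lam1 x * Real.exp (-(z * x)))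
    (ρ : ℝ → ℝ → ℝ)
    (hρ : ∀ T x, ρ T x = T * (1 - a T) * ∑' k : ℕ, (a T) ^ (k + 1) * sconvPow lam1 k (T * x)) :
    ∀ z : ℝ, 0 < z →
      (∀ T : ℝ, 1 ≤ T →
        (∫ x in Set.Ioi (0:ℝ), ρ T x * Real.exp (-(z * x))) =
          (1 - a T) * (a T * Lhat (z / T)) / (1 - a T * Lhat (z / T))) ∧
      Tendsto (fun T : ℝ => ∫ x in Set.Ioi (0:ℝ), ρ T x * Real.exp (-(z * x)))
        atTop (nhds (lam / (lam + z ^ α))) := by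
  intro z hz
  have hα0 : 0 < α := by linarith [hα.1]
  obtain rfl : Lhat = laplace lam1 := funext hLhat
  have hidentity : ∀ T, 0 < T → ∫ x in Ioi 0, ρ T x * exp (-(z * x)) =
      (1 - a T) * (a T * laplace lam1 (z / T)) / (1 - a T * laplace lam1 (z / T)) := fun T hT => by
    simp only [hρ]
    exact laplace_rescaled_renewal_density hnn hsupp hint hnorm.le (ha T).1.le (ha T).2 hT hz.le
  refine ⟨fun T hT => hidentity T (one_pos.trans_le hT), ?_⟩
  have hL := tendsto_rpow_mul_one_sub_laplace hnn (integrable_of_integrableOn_Ioi hsupp hint) hnorm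
    hα0 hα.2 htail hz
  have ha1 := tendsto_one_of_tendsto_rpow_mul_one_sub hα0 haT
  have hL1 := tendsto_one_of_tendsto_rpow_mul_one_sub hα0 hL
  have hΓ : 0 < Gamma (1 - α) := Gamma_pos_of_pos (by linarith [hα.2])
  have hlimit := (haT.mul (ha1.mul hL1)).div (haT.add (ha1.mul hL)) (by positivity)
  rw [show lamStar * (1 * 1) / (lamStar + 1 * (C / α * Gamma (1 - α) * z ^ α)) =
      lam / (lam + z ^ α) by rw [hlam]; field_simp] at hlimit
  refine hlimit.congr' ?_
  filter_upwards [eventually_gt_atTop 0] with T hT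
  rw [Pi.div_apply, hidentity T hT, ← mul_div_mul_left ((1 - a T) * (a T * laplace lam1 (z / T)))
    (1 - a T * laplace lam1 (z / T)) (rpow_pos_of_pos hT α).ne']
  congr 1 <;> ring

/-- in the heavy-tail nearly unstable regime, the Laplace transform of
ρ₁^T(x) = T(1−a_T) ∑_{k≥1} a_T^k λ₁^{*k}(Tx) equals
(1−a_T) a_T λ̂₁(z/T)/(1 − a_T λ̂₁(z/T)) and converges, for every z > 0, to
λ/(λ + z^α) (the Laplace transform of the Mittag-Leffler density), where
λ = α λ*/(C Γ(1−α)). -/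
theorem rho_laplace_convergence (α lamStar C : ℝ)
    (hα : α ∈ Set.Ioo (1/2 : ℝ) 1) (hls : 0 < lamStar) (hC : 0 < C)
    (lam : ℝ) (hlam : lam = α * lamStar / (C * Real.Gamma (1 - α)))
    (lam1 : ℝ → ℝ)
    (hnn : ∀ x, 0 ≤ lam1 x) (hsupp : ∀ x < (0:ℝ), lam1 x = 0)
    (hmeas : Measurable lam1)
    (hint : IntegrableOn lam1 (Set.Ioi 0))
    (hnorm : ∫ x in Set.Ioi (0:ℝ), lam1 x = 1)
    (htail : Tendsto (fun x : ℝ => α * x ^ α * ∫ s in Set.Ioi x, lam1 s)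
      atTop (nhds C))
    (a : ℝ → ℝ) (ha : ∀ T, a T ∈ Set.Ioo (0:ℝ) 1)
    (haT : Tendsto (fun T : ℝ => T ^ α * (1 - a T)) atTop (nhds lamStar))
    (Lhat : ℝ → ℝ)
    (hLhat : ∀ z, Lhat z = ∫ x in Set.Ioi (0:ℝ), lam1 x * Real.exp (-(z * x)))
    (ρ : ℝ → ℝ → ℝ)
    (hρ : ∀ T x, ρ T x = T * (1 - a T) * ∑' k : ℕ, (a T) ^ (k + 1) * sconvPow lam1 k (T * x)) :
    ∀ z : ℝ, 0 < z →
      (∀ T : ℝ, 1 ≤ T →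
        (∫ x in Set.Ioi (0:ℝ), ρ T x * Real.exp (-(z * x))) =
          (1 - a T) * (a T * Lhat (z / T)) / (1 - a T * Lhat (z / T))) ∧
      Tendsto (fun T : ℝ => ∫ x in Set.Ioi (0:ℝ), ρ T x * Real.exp (-(z * x)))
        atTop (nhds (lam / (lam + z ^ α))) :=
  rho_laplace_convergence_general α lamStar C hα hls hC lam hlam lam1 hnn hsupp hint hnorm htail a
    ha haT Lhat hLhat ρ hρ
end

section
/- Let λ: ℝ₊ → ℝ₊ with ‖λ‖₁ < 1 and λ̂ ∈ L²(ℝ), let a_T ∈ (0,1), a_T → 1, and define ψ^T = ∑_{k≥1} a_T^k λ^{*k}. Suppose |λ̂(ω)| ≤ c min(1, 1/|ω|). Then the rescaled function x ↦ ψ^T(Tx) satisfies ∫₀^∞ |ψ^T(Tx)|² dx ≤ (c'/T) ∫_ℝ |λ̂(z)|² dz → 0 as T → ∞. -/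
/-!
Each convolution power `λ^{*k}` is dominated pointwise by the Lebesgue-integral convolution
power of `|λ|`, and Young's inequality `‖f ⋆ g‖₂ ≤ ‖f‖₁ ‖g‖₂` gives
`‖λ^{*(k+1)}‖₂ ≤ ‖λ‖₁ ^ k ‖λ‖₂`. Since `a_T ≤ 1`, Minkowski's inequality and the geometric series
bound `‖ψ^T‖₂` by `‖λ‖₂ / (1 - ‖λ‖₁)` uniformly in `T`, and the substitution `x ↦ T x` produces
the factor `1 / T`. The constant `c'` absorbs the ratio of `‖λ‖₂²` to `∫ |λ̂|²`; all that is
needed about `λ̂` is that `∫ |λ̂|² = 0` forces `∫ λ = λ̂ 0 = 0`, by continuity of `λ̂`.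
-/

open MeasureTheory Filter

open Set
open scoped ENNReal

namespace MeasureTheory

section CauchySchwarz

variable {α : Type*} [MeasurableSpace α] {μ : Measure α}

theorem sq_lintegral_mul_le {f g : α → ℝ≥0∞} (hf : AEMeasurable f μ) (hg : AEMeasurable g μ) :
    (∫⁻ x, f x * g x ∂μ) ^ 2 ≤ (∫⁻ x, f x ^ 2 ∂μ) * ∫⁻ x, g x ^ 2 ∂μ := by
  have h := ENNReal.lintegral_mul_le_Lp_mul_Lq μ Real.HolderConjugate.two_two hf hg
  have hsq : ∀ x : ℝ≥0∞, (x ^ (1 / 2 : ℝ)) ^ 2 = x := fun x => by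
    rw [← ENNReal.rpow_natCast, ← ENNReal.rpow_mul]; norm_num
  simp only [ENNReal.rpow_two] at h
  calc (∫⁻ x, f x * g x ∂μ) ^ 2
      ≤ ((∫⁻ x, f x ^ 2 ∂μ) ^ (1 / 2 : ℝ) * (∫⁻ x, g x ^ 2 ∂μ) ^ (1 / 2 : ℝ)) ^ 2 := by
        gcongr; exact h
    _ = _ := by rw [mul_pow, hsq, hsq]

theorem sq_lintegral_le_measure_univ_mul {g : α → ℝ≥0∞} (hg : AEMeasurable g μ) :
    (∫⁻ x, g x ∂μ) ^ 2 ≤ μ univ * ∫⁻ x, g x ^ 2 ∂μ := by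
  simpa using sq_lintegral_mul_le aemeasurable_const hg (μ := μ) (f := fun _ => 1)

/-- Minkowski's inequality in `L²`, in a form free of square roots. -/
theorem lintegral_sq_tsum_le {g : ℕ → α → ℝ≥0∞} (hg : ∀ k, AEMeasurable (g k) μ)
    {c : ℕ → ℝ≥0∞} {Q : ℝ≥0∞} (hgc : ∀ k, ∫⁻ x, g k x ^ 2 ∂μ ≤ c k ^ 2 * Q) :
    ∫⁻ x, (∑' k, g k x) ^ 2 ∂μ ≤ (∑' k, c k) ^ 2 * Q := by
  have hcross : ∀ k j, ∫⁻ x, g k x * g j x ∂μ ≤ c k * c j * Q := fun k j => by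
    refine (ENNReal.pow_le_pow_left_iff two_ne_zero).1 ?_
    calc (∫⁻ x, g k x * g j x ∂μ) ^ 2 ≤ (∫⁻ x, g k x ^ 2 ∂μ) * ∫⁻ x, g j x ^ 2 ∂μ :=
          sq_lintegral_mul_le (hg k) (hg j)
      _ ≤ (c k ^ 2 * Q) * (c j ^ 2 * Q) := by gcongr <;> apply hgc
      _ = (c k * c j * Q) ^ 2 := by ring
  calc ∫⁻ x, (∑' k, g k x) ^ 2 ∂μ = ∑' k, ∑' j, ∫⁻ x, g k x * g j x ∂μ := by
        simp_rw [sq, ← ENNReal.tsum_mul_right, ← ENNReal.tsum_mul_left]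
        rw [lintegral_tsum fun k => ?_]
        · congr 1 with k
          exact lintegral_tsum fun j => (hg k).mul (hg j)
        · exact AEMeasurable.tsum fun j => (hg k).mul (hg j)
    _ ≤ ∑' k, ∑' j, c k * c j * Q := by gcongr with k j; exact hcross k j
    _ = (∑' k, c k) ^ 2 * Q := by
        simp_rw [ENNReal.tsum_mul_right, ENNReal.tsum_mul_left, ENNReal.tsum_mul_right, sq]

end CauchySchwarz

section Convolution

variable {G : Type*} [MeasurableSpace G] [AddGroup G] [MeasurableAdd₂ G] [MeasurableNeg G]
  {μ : Measure G} {f g : G → ℝ≥0∞}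

theorem sq_lconvolution_le (hf : Measurable f) (hg : Measurable g) (x : G) :
    (f ⋆ₗ[μ] g) x ^ 2 ≤ (∫⁻ y, f y ∂μ) * (f ⋆ₗ[μ] fun y => g y ^ 2) x := by
  have hgx : Measurable fun y => g (-y + x) := by fun_prop
  have hdensity : ∀ {h : G → ℝ≥0∞}, Measurable h →
      ∫⁻ y, h y ∂μ.withDensity f = ∫⁻ y, f y * h y ∂μ :=
    fun hh => lintegral_withDensity_eq_lintegral_mul μ hf hh
  simp_rw [lconvolution_def, ← hdensity hgx, ← hdensity (hgx.pow_const 2)]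
  simpa [withDensity_apply] using
    sq_lintegral_le_measure_univ_mul hgx.aemeasurable (μ := μ.withDensity f)

variable (μ) in
/-- `lconvPow μ f k = f^{*(k+1)}`, indexed as `sconvPow`. -/
noncomputable def lconvPow (f : G → ℝ≥0∞) : ℕ → G → ℝ≥0∞
  | 0 => f
  | k + 1 => f ⋆ₗ[μ] lconvPow f k

variable (μ) in
noncomputable def lresolvent (f : G → ℝ≥0∞) (w : ℝ≥0∞) (x : G) : ℝ≥0∞ :=
  ∑' k, w ^ (k + 1) * lconvPow μ f k x

variable [SFinite μ]

theorem measurable_lconvPow (hf : Measurable f) (k : ℕ) : Measurable (lconvPow μ f k) := by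
  induction k with
  | zero => exact hf
  | succ k ih => exact measurable_lconvolution μ hf ih

theorem measurable_lresolvent (hf : Measurable f) (w : ℝ≥0∞) : Measurable (lresolvent μ f w) :=
  Measurable.tsum fun k => (measurable_lconvPow hf k).const_mul _

variable [μ.IsAddLeftInvariant]

theorem lintegral_lconvolution (hf : Measurable f) (hg : Measurable g) :
    ∫⁻ x, (f ⋆ₗ[μ] g) x ∂μ = (∫⁻ x, f x ∂μ) * ∫⁻ x, g x ∂μ := by
  simp_rw [lconvolution_def]
  rw [lintegral_lintegral_swap (by fun_prop)]
  have hshift : ∀ y, ∫⁻ x, f y * g (-y + x) ∂μ = f y * ∫⁻ x, g x ∂μ := fun y => by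
    rw [lintegral_const_mul _ (by fun_prop), lintegral_add_left_eq_self]
  simp_rw [hshift]
  exact lintegral_mul_const _ hf

/-- Young's inequality `‖f ⋆ g‖₂ ≤ ‖f‖₁ ‖g‖₂`. -/
theorem lintegral_sq_lconvolution_le (hf : Measurable f) (hg : Measurable g) :
    ∫⁻ x, (f ⋆ₗ[μ] g) x ^ 2 ∂μ ≤ (∫⁻ x, f x ∂μ) ^ 2 * ∫⁻ x, g x ^ 2 ∂μ :=
  calc ∫⁻ x, (f ⋆ₗ[μ] g) x ^ 2 ∂μ ≤ ∫⁻ x, (∫⁻ y, f y ∂μ) * (f ⋆ₗ[μ] fun y => g y ^ 2) x ∂μ :=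
        lintegral_mono (sq_lconvolution_le hf hg)
    _ = (∫⁻ x, f x ∂μ) ^ 2 * ∫⁻ x, g x ^ 2 ∂μ := by
        rw [lintegral_const_mul _ (measurable_lconvolution μ hf (hg.pow_const 2)),
          lintegral_lconvolution hf (hg.pow_const 2), sq, mul_assoc]

theorem lintegral_lconvPow (hf : Measurable f) (k : ℕ) :
    ∫⁻ x, lconvPow μ f k x ∂μ = (∫⁻ x, f x ∂μ) ^ (k + 1) := by
  induction k with
  | zero => simp [lconvPow]
  | succ k ih =>
    rw [lconvPow, lintegral_lconvolution hf (measurable_lconvPow hf k), ih, pow_succ' _ (k + 1)]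

theorem lintegral_sq_lconvPow_le (hf : Measurable f) (k : ℕ) :
    ∫⁻ x, lconvPow μ f k x ^ 2 ∂μ ≤ ((∫⁻ x, f x ∂μ) ^ k) ^ 2 * ∫⁻ x, f x ^ 2 ∂μ := by
  induction k with
  | zero => simp [lconvPow]
  | succ k ih =>
    calc ∫⁻ x, lconvPow μ f (k + 1) x ^ 2 ∂μ
        ≤ (∫⁻ x, f x ∂μ) ^ 2 * ∫⁻ x, lconvPow μ f k x ^ 2 ∂μ :=
          lintegral_sq_lconvolution_le hf (measurable_lconvPow hf k)
      _ ≤ (∫⁻ x, f x ∂μ) ^ 2 * (((∫⁻ x, f x ∂μ) ^ k) ^ 2 * ∫⁻ x, f x ^ 2 ∂μ) := by gcongr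
      _ = ((∫⁻ x, f x ∂μ) ^ (k + 1)) ^ 2 * ∫⁻ x, f x ^ 2 ∂μ := by ring

variable {w : ℝ≥0∞}

theorem lintegral_lresolvent_le (hf : Measurable f) (hw : w ≤ 1) :
    ∫⁻ x, lresolvent μ f w x ∂μ ≤ (∫⁻ x, f x ∂μ) * (1 - ∫⁻ x, f x ∂μ)⁻¹ := by
  unfold lresolvent
  rw [lintegral_tsum fun k => ((measurable_lconvPow hf k).const_mul _).aemeasurable,
    ← ENNReal.tsum_geometric_add_one]
  gcongr with k
  rw [lintegral_const_mul _ (measurable_lconvPow hf k), lintegral_lconvPow hf]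
  exact mul_le_of_le_one_left zero_le (pow_le_one₀ zero_le hw)

theorem lintegral_sq_lresolvent_le (hf : Measurable f) (hw : w ≤ 1) :
    ∫⁻ x, lresolvent μ f w x ^ 2 ∂μ ≤ (1 - ∫⁻ x, f x ∂μ)⁻¹ ^ 2 * ∫⁻ x, f x ^ 2 ∂μ := by
  rw [← ENNReal.tsum_geometric]
  refine lintegral_sq_tsum_le (fun k => ((measurable_lconvPow hf k).const_mul _).aemeasurable)
    fun k => ?_
  simp_rw [mul_pow]
  rw [lintegral_const_mul _ ((measurable_lconvPow hf k).pow_const 2)]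
  calc (w ^ (k + 1)) ^ 2 * ∫⁻ x, lconvPow μ f k x ^ 2 ∂μ
      ≤ 1 * (((∫⁻ x, f x ∂μ) ^ k) ^ 2 * ∫⁻ x, f x ^ 2 ∂μ) := by
        gcongr
        · exact pow_le_one₀ zero_le (pow_le_one₀ zero_le hw)
        · exact lintegral_sq_lconvPow_le hf k
    _ = _ := one_mul _

end Convolution

end MeasureTheory

theorem setLIntegral_Ioi_eq_lintegral {μ : Measure ℝ} [NullSingletonClass μ] {f : ℝ → ℝ≥0∞}
    (hf : ∀ x < 0, f x = 0) : ∫⁻ x in Ioi 0, f x ∂μ = ∫⁻ x, f x ∂μ := by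
  rw [setLIntegral_congr Ioi_ae_eq_Ici]
  refine setLIntegral_eq_of_support_subset fun x hx => ?_
  by_contra hneg
  exact hx (hf x (not_le.1 hneg))

theorem continuous_integral_mul_cexp {μ : Measure ℝ} {f : ℝ → ℝ} (hf : Integrable f μ) :
    Continuous fun ω : ℝ => ∫ x, (f x : ℂ) * Complex.exp (Complex.I * ω * x) ∂μ := by
  refine continuous_of_dominated (bound := fun x => ‖f x‖) (fun ω => ?_) (fun ω => ?_) hf.norm
    (ae_of_all _ fun x => by fun_prop)
  · exact (Complex.continuous_ofReal.comp_aestronglyMeasurable hf.1).mul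
      (by fun_prop : Continuous fun x : ℝ => Complex.exp (Complex.I * ω * x)).aestronglyMeasurable
  · refine ae_of_all _ fun x => ?_
    rw [norm_mul, Complex.norm_exp, Complex.norm_real]
    simp

theorem integral_eq_zero_of_integral_norm_sq_eq_zero {μ : Measure ℝ} {f : ℝ → ℝ}
    (hf : Integrable f μ) {F : ℝ → ℂ}
    (hF : ∀ ω, F ω = ∫ x, (f x : ℂ) * Complex.exp (Complex.I * ω * x) ∂μ)
    (hF2 : Integrable fun z : ℝ => ‖F z‖ ^ 2) (h0 : ∫ z : ℝ, ‖F z‖ ^ 2 = 0) :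
    ∫ x, f x ∂μ = 0 := by
  have hcont : Continuous F := by
    simpa only [← funext hF] using continuous_integral_mul_cexp hf
  have hae : F =ᵐ[volume] 0 := by
    filter_upwards [(integral_eq_zero_iff_of_nonneg (fun z => sq_nonneg _) hF2).1 h0] with z hz
    simpa using hz
  have hF0 : F 0 = 0 := congrFun ((hcont.ae_eq_iff_eq volume continuous_const).1 hae) 0
  simp only [hF, Complex.ofReal_zero, mul_zero, zero_mul, Complex.exp_zero, mul_one] at hF0
  exact_mod_cast hF0

theorem exists_pos_le_mul {C I : ℝ} (hI : 0 ≤ I) (hCI : I = 0 → C ≤ 0) :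
    ∃ c, 0 < c ∧ C ≤ c * I := by
  rcases hI.eq_or_lt with hI0 | hIpos
  · exact ⟨1, one_pos, by simpa [← hI0] using hCI hI0.symm⟩
  · exact ⟨max C 1 / I, by positivity, by rw [div_mul_cancel₀ _ hIpos.ne']; exact le_max_left _ _⟩

section ConvolutionPowers

variable {lam : ℝ → ℝ}

theorem enorm_sconvPow_le (k : ℕ) (t : ℝ) :
    ‖sconvPow lam k t‖ₑ ≤ lconvPow volume (fun x => ‖lam x‖ₑ) k t := by
  induction k generalizing t with
  | zero => exact le_rfl
  | succ k ih =>
    calc ‖sconvPow lam (k + 1) t‖ₑ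
        = ‖∫ s in uIoc 0 t, lam s * sconvPow lam k (t - s)‖ₑ := by
          simp only [sconvPow, sconv, ← ofReal_norm,
            intervalIntegral.norm_integral_eq_norm_integral_uIoc]
      _ ≤ ∫⁻ s in uIoc 0 t, ‖lam s * sconvPow lam k (t - s)‖ₑ :=
          enorm_integral_le_lintegral_enorm _
      _ ≤ ∫⁻ s, ‖lam s * sconvPow lam k (t - s)‖ₑ := setLIntegral_le_lintegral _ _
      _ ≤ ∫⁻ s, ‖lam s‖ₑ * lconvPow volume (fun x => ‖lam x‖ₑ) k (-s + t) := by
          gcongr with s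
          rw [enorm_mul, neg_add_eq_sub]
          gcongr
          exact ih _

theorem sconvPow_eq_zero_of_neg_s15 (hsupp : ∀ x < 0, lam x = 0) (k : ℕ) {t : ℝ} (ht : t < 0) :
    sconvPow lam k t = 0 := by
  induction k generalizing t with
  | zero => exact hsupp t ht
  | succ k ih =>
    rw [sconvPow, sconv, intervalIntegral.integral_of_ge ht.le,
      setIntegral_eq_zero_of_forall_eq_zero fun s hs => by rw [ih (by linarith [hs.1]), mul_zero],
      neg_zero]

theorem sconvPow_nonneg_s15 (hnn : ∀ x, 0 ≤ lam x) (hsupp : ∀ x < 0, lam x = 0) (k : ℕ) (t : ℝ) :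
    0 ≤ sconvPow lam k t := by
  induction k generalizing t with
  | zero => exact hnn t
  | succ k ih =>
    rcases lt_or_ge t 0 with ht | ht
    · exact (sconvPow_eq_zero_of_neg_s15 hsupp _ ht).ge
    · exact intervalIntegral.integral_nonneg ht fun s _ => mul_nonneg (hnn s) (ih _)

/-- As a `tsum`, this is `0` wherever the series diverges. -/
noncomputable def sresolvent (lam : ℝ → ℝ) (b x : ℝ) : ℝ :=
  ∑' k, b ^ (k + 1) * sconvPow lam k x

theorem enorm_sresolvent_le (b x : ℝ) :
    ‖sresolvent lam b x‖ₑ ≤ lresolvent volume (fun y => ‖lam y‖ₑ) ‖b‖ₑ x :=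
  enorm_tsum_le_tsum_enorm.trans <| ENNReal.tsum_le_tsum fun k => by
    rw [enorm_mul, enorm_pow]
    gcongr
    exact enorm_sconvPow_le k x

theorem mul_le_sresolvent (hnn : ∀ x, 0 ≤ lam x) (hsupp : ∀ x < 0, lam x = 0) {b x : ℝ}
    (hb : 0 ≤ b) (hx : lresolvent volume (fun y => ‖lam y‖ₑ) ‖b‖ₑ x ≠ ∞) :
    b * lam x ≤ sresolvent lam b x := by
  have hterm : ∀ k, 0 ≤ b ^ (k + 1) * sconvPow lam k x := fun k =>
    mul_nonneg (pow_nonneg hb _) (sconvPow_nonneg_s15 hnn hsupp k x)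
  have hsum : Summable fun k => b ^ (k + 1) * sconvPow lam k x := by
    refine .of_norm (tsum_enorm_ne_top_iff_summable_norm.1 (ne_top_of_le_ne_top hx ?_))
    refine ENNReal.tsum_le_tsum fun k => ?_
    rw [enorm_mul, enorm_pow]
    gcongr
    exact enorm_sconvPow_le k x
  simpa [sconvPow, sresolvent] using hsum.le_tsum 0 fun k _ => hterm k

theorem integral_sq_sresolvent_le (hmeas : Measurable lam) {b : ℝ} (hb : |b| ≤ 1) (s : Set ℝ)
    (hR : (1 - ∫⁻ x, ‖lam x‖ₑ)⁻¹ ^ 2 * ∫⁻ x, ‖lam x‖ₑ ^ 2 ≠ ∞) :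
    ∫ x in s, sresolvent lam b x ^ 2
      ≤ ((1 - ∫⁻ x, ‖lam x‖ₑ)⁻¹ ^ 2 * ∫⁻ x, ‖lam x‖ₑ ^ 2).toReal := by
  have hbe : ‖b‖ₑ ≤ 1 := by rwa [Real.enorm_eq_ofReal_abs, ENNReal.ofReal_le_one]
  calc ∫ x in s, sresolvent lam b x ^ 2 ≤ ‖∫ x in s, sresolvent lam b x ^ 2‖ := Real.le_norm_self _
    _ ≤ (∫⁻ x in s, ENNReal.ofReal ‖sresolvent lam b x ^ 2‖).toReal :=
        norm_integral_le_lintegral_norm _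
    _ ≤ _ := by
        refine ENNReal.toReal_mono hR ?_
        calc ∫⁻ x in s, ENNReal.ofReal ‖sresolvent lam b x ^ 2‖
            ≤ ∫⁻ x in s, lresolvent volume (fun y => ‖lam y‖ₑ) ‖b‖ₑ x ^ 2 := by
              simp_rw [ofReal_norm, enorm_pow]
              gcongr with x
              exact enorm_sresolvent_le b x
          _ ≤ ∫⁻ x, lresolvent volume (fun y => ‖lam y‖ₑ) ‖b‖ₑ x ^ 2 :=
              setLIntegral_le_lintegral _ _
          _ ≤ _ := lintegral_sq_lresolvent_le hmeas.enorm hbe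

theorem not_integrableOn_sq_sresolvent (hnn : ∀ x, 0 ≤ lam x) (hsupp : ∀ x < 0, lam x = 0)
    (hmeas : Measurable lam) (hN : ∫⁻ x, ‖lam x‖ₑ < 1) (hQ : ∫⁻ x, ‖lam x‖ₑ ^ 2 = ∞) {b : ℝ}
    (hb0 : 0 < b) (hb1 : b ≤ 1) :
    ¬ IntegrableOn (fun x => sresolvent lam b x ^ 2) (Ioi 0) := by
  set Ψ := lresolvent volume (fun y => ‖lam y‖ₑ) ‖b‖ₑ
  have hbe : ‖b‖ₑ ≤ 1 := by rwa [Real.enorm_eq_ofReal hb0.le, ENNReal.ofReal_le_one]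
  have hΨ : ∫⁻ x, Ψ x ≠ ∞ := by
    refine ne_top_of_le_ne_top ?_ (lintegral_lresolvent_le hmeas.enorm hbe)
    exact ENNReal.mul_ne_top hN.ne_top (ENNReal.inv_ne_top.2 (tsub_pos_of_lt hN).ne')
  have hlow : ∀ᵐ x, ‖b‖ₑ ^ 2 * ‖lam x‖ₑ ^ 2 ≤ ‖sresolvent lam b x ^ 2‖ₑ := by
    filter_upwards [ae_lt_top (measurable_lresolvent hmeas.enorm _) hΨ] with x hx
    have hblam : 0 ≤ b * lam x := mul_nonneg hb0.le (hnn x)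
    have hψ := mul_le_sresolvent hnn hsupp hb0.le hx.ne
    rw [← mul_pow, ← enorm_mul, enorm_pow, Real.enorm_eq_ofReal hblam,
      Real.enorm_eq_ofReal (hblam.trans hψ)]
    gcongr
  intro hint
  have hfin := (lintegral_mono_ae (ae_restrict_of_ae hlow)).trans_lt hint.2
  rw [lintegral_const_mul _ (hmeas.enorm.pow_const 2),
    setLIntegral_Ioi_eq_lintegral fun x hx => by simp [hsupp x hx], hQ,
    ENNReal.mul_top (by simp [hb0.ne'])] at hfin
  exact lt_irrefl _ hfin

/-- When `λ ∉ L²` both sides are `0`: then `ψ ≥ b λ` is not square integrable, so the Bochner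
integral takes its junk value. -/
theorem integral_Ioi_sq_sresolvent_le (hnn : ∀ x, 0 ≤ lam x) (hsupp : ∀ x < 0, lam x = 0)
    (hmeas : Measurable lam) (hN : ∫⁻ x, ‖lam x‖ₑ < 1) {b : ℝ} (hb0 : 0 < b) (hb1 : b ≤ 1) :
    ∫ x in Ioi 0, sresolvent lam b x ^ 2
      ≤ ((1 - ∫⁻ x, ‖lam x‖ₑ)⁻¹ ^ 2 * ∫⁻ x, ‖lam x‖ₑ ^ 2).toReal := by
  by_cases hR : (1 - ∫⁻ x, ‖lam x‖ₑ)⁻¹ ^ 2 * ∫⁻ x, ‖lam x‖ₑ ^ 2 = ∞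
  · have hQ : ∫⁻ x, ‖lam x‖ₑ ^ 2 = ∞ :=
      ((ENNReal.mul_eq_top.1 hR).resolve_right fun h => ENNReal.pow_ne_top
        (ENNReal.inv_ne_top.2 (tsub_pos_of_lt hN).ne') h.1).2
    rw [integral_undef (not_integrableOn_sq_sresolvent hnn hsupp hmeas hN hQ hb0 hb1), hR,
      ENNReal.toReal_top]
  · exact integral_sq_sresolvent_le hmeas (abs_le.2 ⟨by linarith, hb1⟩) _ hR

theorem lintegral_enorm_eq_ofReal_integral_Ioi (hnn : ∀ x, 0 ≤ lam x)
    (hsupp : ∀ x < 0, lam x = 0) (hint : IntegrableOn lam (Ioi 0)) :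
    ∫⁻ x, ‖lam x‖ₑ = ENNReal.ofReal (∫ x in Ioi 0, lam x) := by
  rw [← setLIntegral_Ioi_eq_lintegral fun x hx => by simp [hsupp x hx],
    ofReal_integral_eq_lintegral_ofReal hint (ae_of_all _ hnn)]
  simp_rw [Real.enorm_eq_ofReal (hnn _)]

end ConvolutionPowers

theorem psiT_L2_bound_general (lam : ℝ → ℝ)
    (hnn : ∀ x, 0 ≤ lam x) (hsupp : ∀ x < (0:ℝ), lam x = 0)
    (hmeas : Measurable lam)
    (hint : IntegrableOn lam (Set.Ioi 0))
    (hnorm : ∫ x in Set.Ioi (0:ℝ), lam x < 1)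
    (a : ℝ → ℝ) (ha : ∀ T, a T ∈ Set.Ioo (0:ℝ) 1)
    (Lhat : ℝ → ℂ)
    (hLhat : ∀ ω, Lhat ω = ∫ x in Set.Ioi (0:ℝ), (lam x : ℂ) * Complex.exp (Complex.I * ω * x))
    (hL2 : Integrable fun z : ℝ => ‖Lhat z‖ ^ 2)
    (ψ : ℝ → ℝ → ℝ)
    (hψ : ∀ T x, ψ T x = ∑' k : ℕ, (a T) ^ (k + 1) * sconvPow lam k x) :
    (∃ c' : ℝ, 0 < c' ∧ ∀ T : ℝ, 1 ≤ T →
        (∫ x in Set.Ioi (0:ℝ), (ψ T (T * x)) ^ 2) ≤ (c' / T) * ∫ z : ℝ, ‖Lhat z‖ ^ 2) ∧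
    Tendsto (fun T : ℝ => ∫ x in Set.Ioi (0:ℝ), (ψ T (T * x)) ^ 2) atTop (nhds 0) := by
  have hN := lintegral_enorm_eq_ofReal_integral_Ioi hnn hsupp hint
  set C := ((1 - ∫⁻ x, ‖lam x‖ₑ)⁻¹ ^ 2 * ∫⁻ x, ‖lam x‖ₑ ^ 2).toReal
  have hbound : ∀ T, 0 < T → ∫ x in Ioi 0, ψ T (T * x) ^ 2 ≤ C / T := fun T hT => by
    rw [integral_comp_mul_left_Ioi (fun x => ψ T x ^ 2) 0 hT, mul_zero, smul_eq_mul,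
      inv_mul_eq_div, funext (hψ T)]
    gcongr
    exact integral_Ioi_sq_sresolvent_le hnn hsupp hmeas (hN ▸ ENNReal.ofReal_lt_one.2 hnorm)
      (ha T).1 (ha T).2.le
  have hCI : ∫ z, ‖Lhat z‖ ^ 2 = 0 → C ≤ 0 := fun hI => by
    have hN0 : ∫⁻ x, ‖lam x‖ₑ = 0 := by
      rw [hN, integral_eq_zero_of_integral_norm_sq_eq_zero hint hLhat hL2 hI, ENNReal.ofReal_zero]
    have hQ0 : ∫⁻ x, ‖lam x‖ₑ ^ 2 = 0 := by
      rw [lintegral_eq_zero_iff (hmeas.enorm.pow_const 2)]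
      filter_upwards [(lintegral_eq_zero_iff hmeas.enorm).1 hN0] with x hx
      simp_all
    simp [C, hQ0]
  obtain ⟨c', hc', hCc'⟩ := exists_pos_le_mul (integral_nonneg fun z => sq_nonneg _) hCI
  refine ⟨⟨c', hc', fun T hT => (hbound T (by linarith)).trans ?_⟩, ?_⟩
  · rw [div_mul_eq_mul_div]
    gcongr
  · refine squeeze_zero' (Eventually.of_forall fun T => setIntegral_nonneg measurableSet_Ioi
      fun x _ => sq_nonneg _) ?_ (tendsto_const_nhds (x := C).div_atTop tendsto_id)
    filter_upwards [eventually_gt_atTop 0] with T hT using hbound T hT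

/-- Plancherel bound for the rescaled resolvent: with
ψ^T = ∑_{k≥1} a_T^k λ^{*k}, one has
∫₀^∞ |ψ^T(Tx)|² dx ≤ (c'/T) ∫_ℝ |λ̂(z)|² dz, which tends to 0 as T → ∞. -/
theorem psiT_L2_bound (lam : ℝ → ℝ)
    (hnn : ∀ x, 0 ≤ lam x) (hsupp : ∀ x < (0:ℝ), lam x = 0)
    (hmeas : Measurable lam)
    (hint : IntegrableOn lam (Set.Ioi 0))
    (hnorm : ∫ x in Set.Ioi (0:ℝ), lam x < 1)
    (a : ℝ → ℝ) (ha : ∀ T, a T ∈ Set.Ioo (0:ℝ) 1)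
    (haT : Tendsto a atTop (nhds 1))
    (Lhat : ℝ → ℂ)
    (hLhat : ∀ ω, Lhat ω = ∫ x in Set.Ioi (0:ℝ), (lam x : ℂ) * Complex.exp (Complex.I * ω * x))
    (hL2 : Integrable fun z : ℝ => ‖Lhat z‖ ^ 2)
    (c : ℝ) (hc : 0 < c)
    (hbound : ∀ ω : ℝ, ω ≠ 0 → ‖Lhat ω‖ ≤ c * min 1 (1 / |ω|))
    (ψ : ℝ → ℝ → ℝ)
    (hψ : ∀ T x, ψ T x = ∑' k : ℕ, (a T) ^ (k + 1) * sconvPow lam k x) :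
    (∃ c' : ℝ, 0 < c' ∧ ∀ T : ℝ, 1 ≤ T →
        (∫ x in Set.Ioi (0:ℝ), (ψ T (T * x)) ^ 2) ≤ (c' / T) * ∫ z : ℝ, ‖Lhat z‖ ^ 2) ∧
    Tendsto (fun T : ℝ => ∫ x in Set.Ioi (0:ℝ), (ψ T (T * x)) ^ 2) atTop (nhds 0) :=
  psiT_L2_bound_general lam hnn hsupp hmeas hint hnorm a ha Lhat hLhat hL2 ψ hψ
end
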